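/- Let H₊ and H₋ be Hermitian n×n complex matrices such that H₊ is positive definite and the kernel of H₋ equals the span of two linearly independent vectors φ₁, φ₂ ∈ ℂⁿ. Let H : ℂⁿ × ℂⁿ → ℂⁿ × ℂⁿ be the linear map H(f, g) = (H₋g, H₊f). Then: (i) ker(H) = {0} × span{φ₁, φ₂}; (ii) ker(H²) = ker(H) ⊕ span{(H₊⁻¹φ₁, 0), (H₊⁻¹φ₂, 0)}; (iii) ker(H³) = ker(H²). In particular, the generalized nullspace of H equals ker(H²) and has dimension 4. -/

import Mathlib

/-! `H(f, g) = (H₋g, H₊f)` is block antidiagonal, so `H²` is block diagonal with blocks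
`H₋H₊` and `H₊H₋`, and `H³` is block antidiagonal with blocks `H₊H₋H₊` and `H₋H₊H₋`.
Since `H₊` is injective, all kernels reduce to `ker H₋` and `H₊⁻¹ (ker H₋)`. The one
nontrivial point is `ker (H₋H₊H₋) = ker H₋`: if `H₋H₊H₋ g = 0` then `H₊H₋ g ∈ ker H₋`,
which is orthogonal to `range H₋ ∋ H₋ g` because `H₋` is Hermitian, and positivity of
`⟨H₋ g, H₊H₋ g⟩ = 0` forces `H₋ g = 0`. -/

open Matrix
open scoped ComplexOrder

namespace LinearMap

variable {R V W : Type*} [Semiring R] [AddCommMonoid V] [AddCommMonoid W] [Module R V]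
  [Module R W]

def antidiag (A : V →ₗ[R] W) (B : W →ₗ[R] V) : Module.End R (V × W) :=
  (B ∘ₗ snd R V W).prod (A ∘ₗ fst R V W)

variable (A : V →ₗ[R] W) (B : W →ₗ[R] V)

@[simp]
theorem antidiag_apply (x : V × W) : antidiag A B x = (B x.2, A x.1) := rfl

theorem ker_antidiag : ker (antidiag A B) = (ker A).prod (ker B) := by
  ext ⟨f, g⟩
  simp [and_comm]

theorem antidiag_sq : antidiag A B ^ 2 = prodMap (B ∘ₗ A) (A ∘ₗ B) := by
  ext <;> simp [sq]

theorem antidiag_pow_three : antidiag A B ^ 3 = antidiag (A ∘ₗ B ∘ₗ A) (B ∘ₗ A ∘ₗ B) := by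
  ext <;> simp [pow_succ]

theorem ker_antidiag_sq : ker (antidiag A B ^ 2) = (ker (B ∘ₗ A)).prod (ker (A ∘ₗ B)) := by
  rw [antidiag_sq, ker_prodMap]

variable {A B}

theorem ker_antidiag_pow_three_eq_ker_sq (hA : ker A = ⊥) (hB : ker (B ∘ₗ A ∘ₗ B) = ker B) :
    ker (antidiag A B ^ 3) = ker (antidiag A B ^ 2) := by
  rw [antidiag_pow_three, ker_antidiag, ker_antidiag_sq, ker_comp_of_ker_eq_bot _ hA, hB,
    ker_comp_of_ker_eq_bot _ hA]

end LinearMap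

namespace Matrix

variable {n R : Type*} [Fintype n] [CommRing R]

theorem comap_mulVecLin_eq_map_nonsing_inv [DecidableEq n] {M : Matrix n n R} (hM : IsUnit M)
    (p : Submodule R (n → R)) : p.comap M.mulVecLin = p.map M⁻¹.mulVecLin := by
  have hdet := (isUnit_iff_isUnit_det M).mp hM
  ext x
  constructor
  · intro hx
    exact ⟨M *ᵥ x, hx, by simp [mulVec_mulVec, nonsing_inv_mul _ hdet]⟩
  · rintro ⟨y, hy, rfl⟩
    simpa [mulVec_mulVec, mul_nonsing_inv _ hdet] using hy

theorem IsHermitian.ker_mulVecLin_comp_posDef_comp [PartialOrder R] [StarRing R]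
    {A B : Matrix n n R} (hB : B.IsHermitian) (hA : A.PosDef) :
    LinearMap.ker (B.mulVecLin ∘ₗ A.mulVecLin ∘ₗ B.mulVecLin) = LinearMap.ker B.mulVecLin := by
  ext x
  simp only [LinearMap.mem_ker, LinearMap.comp_apply, mulVecLin_apply]
  refine ⟨fun hx => ?_, fun hx => by rw [hx, mulVec_zero, mulVec_zero]⟩
  by_contra hBx
  have hzero : star (B *ᵥ x) ⬝ᵥ (A *ᵥ (B *ᵥ x)) = 0 := by
    rw [star_mulVec, ← dotProduct_mulVec, hB.eq, hx, dotProduct_zero]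
  exact (hA.dotProduct_mulVec_pos hBx).ne' hzero

end Matrix

section Finrank

variable {K V W : Type*} [DivisionRing K] [AddCommGroup V] [Module K V] [AddCommGroup W]
  [Module K W]

theorem Submodule.finrank_prod (p : Submodule K V) (q : Submodule K W)
    [FiniteDimensional K p] [FiniteDimensional K q] :
    Module.finrank K (p.prod q) = Module.finrank K p + Module.finrank K q := by
  let e : p.prod q ≃ₗ[K] p × q :=
    { toFun x := (⟨x.1.1, x.2.1⟩, ⟨x.1.2, x.2.2⟩)
      invFun y := ⟨(y.1, y.2), y.1.2, y.2.2⟩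
      map_add' _ _ := rfl
      map_smul' _ _ := rfl
      left_inv _ := rfl
      right_inv _ := rfl }
  rw [e.finrank_eq, Module.finrank_prod]

theorem finrank_span_pair {a b : V} (h : LinearIndependent K ![a, b]) :
    Module.finrank K (Submodule.span K {a, b}) = 2 := by
  rw [← Matrix.range_cons_cons_empty a b ![], finrank_span_eq_card h, Fintype.card_fin]

end Finrank

theorem generalized_nullspace_without_josephson_general
    (n : ℕ) (Hp Hm : Matrix (Fin n) (Fin n) ℂ)
    (hHm : Hm.IsHermitian) (hHp : Hp.PosDef)
    (φ1 φ2 : Fin n → ℂ) (hind : LinearIndependent ℂ ![φ1, φ2])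
    (hker : LinearMap.ker Hm.mulVecLin = Submodule.span ℂ {φ1, φ2})
    (H : Module.End ℂ ((Fin n → ℂ) × (Fin n → ℂ)))
    (hH : ∀ fg : (Fin n → ℂ) × (Fin n → ℂ), H fg = (Hm.mulVec fg.2, Hp.mulVec fg.1)) :
    LinearMap.ker H = Submodule.prod ⊥ (Submodule.span ℂ {φ1, φ2})
    ∧ LinearMap.ker (H ^ 2)
        = LinearMap.ker H ⊔ Submodule.span ℂ
            {((Hp⁻¹.mulVec φ1, 0) : (Fin n → ℂ) × (Fin n → ℂ)),
             ((Hp⁻¹.mulVec φ2, 0) : (Fin n → ℂ) × (Fin n → ℂ))}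
    ∧ Disjoint (LinearMap.ker H)
        (Submodule.span ℂ
            {((Hp⁻¹.mulVec φ1, 0) : (Fin n → ℂ) × (Fin n → ℂ)),
             ((Hp⁻¹.mulVec φ2, 0) : (Fin n → ℂ) × (Fin n → ℂ))})
    ∧ LinearMap.ker (H ^ 3) = LinearMap.ker (H ^ 2)
    ∧ Module.finrank ℂ (LinearMap.ker (H ^ 2)) = 4 := by
  obtain rfl : H = LinearMap.antidiag Hp.mulVecLin Hm.mulVecLin := LinearMap.ext hH
  set S := Submodule.span ℂ {φ1, φ2}
  set T := Submodule.span ℂ {Hp⁻¹ *ᵥ φ1, Hp⁻¹ *ᵥ φ2}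
  have hHp_ker : LinearMap.ker Hp.mulVecLin = ⊥ :=
    LinearMap.ker_eq_bot.mpr (mulVec_injective_of_isUnit hHp.isUnit)
  have hT : S.map Hp⁻¹.mulVecLin = T := by rw [Submodule.map_span, Set.image_pair]; rfl
  have hspan : Submodule.span ℂ
      {((Hp⁻¹ *ᵥ φ1, 0) : (Fin n → ℂ) × (Fin n → ℂ)), (Hp⁻¹ *ᵥ φ2, 0)} = T.prod ⊥ := by
    rw [← Submodule.map_inl, Submodule.map_span, Set.image_pair]; rfl
  have hker1 : LinearMap.ker (LinearMap.antidiag Hp.mulVecLin Hm.mulVecLin) = .prod ⊥ S := by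
    rw [LinearMap.ker_antidiag, hHp_ker, hker]
  have hker2 : LinearMap.ker (LinearMap.antidiag Hp.mulVecLin Hm.mulVecLin ^ 2) = T.prod S := by
    rw [LinearMap.ker_antidiag_sq, LinearMap.ker_comp, LinearMap.ker_comp_of_ker_eq_bot _ hHp_ker,
      hker, comap_mulVecLin_eq_map_nonsing_inv hHp.isUnit, hT]
  refine ⟨hker1, ?_, ?_, ?_, ?_⟩
  · rw [hker2, hker1, hspan, Submodule.prod_sup_prod, bot_sup_eq, sup_bot_eq]
  · rw [hker1, hspan, disjoint_iff, Submodule.prod_inf_prod, bot_inf_eq, inf_bot_eq,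
      Submodule.prod_bot]
  · exact LinearMap.ker_antidiag_pow_three_eq_ker_sq hHp_ker
      (hHm.ker_mulVecLin_comp_posDef_comp hHp)
  · have hinj : Function.Injective Hp⁻¹.mulVecLin :=
      mulVec_injective_of_isUnit (isUnit_nonsing_inv_iff.mpr hHp.isUnit)
    rw [hker2, Submodule.finrank_prod, ← hT,
      ← (Submodule.equivMapOfInjective _ hinj S).finrank_eq, finrank_span_pair hind]

theorem generalized_nullspace_without_josephson
    (n : ℕ) (Hp Hm : Matrix (Fin n) (Fin n) ℂ)
    (hHm : Hm.IsHermitian) (hHpHerm : Hp.IsHermitian) (hHp : Hp.PosDef)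
    (φ1 φ2 : Fin n → ℂ) (hind : LinearIndependent ℂ ![φ1, φ2])
    (hker : LinearMap.ker Hm.mulVecLin = Submodule.span ℂ {φ1, φ2})
    (H : Module.End ℂ ((Fin n → ℂ) × (Fin n → ℂ)))
    (hH : ∀ fg : (Fin n → ℂ) × (Fin n → ℂ), H fg = (Hm.mulVec fg.2, Hp.mulVec fg.1)) :
    LinearMap.ker H = Submodule.prod ⊥ (Submodule.span ℂ {φ1, φ2})
    ∧ LinearMap.ker (H ^ 2)
        = LinearMap.ker H ⊔ Submodule.span ℂ
            {((Hp⁻¹.mulVec φ1, 0) : (Fin n → ℂ) × (Fin n → ℂ)),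
             ((Hp⁻¹.mulVec φ2, 0) : (Fin n → ℂ) × (Fin n → ℂ))}
    ∧ Disjoint (LinearMap.ker H)
        (Submodule.span ℂ
            {((Hp⁻¹.mulVec φ1, 0) : (Fin n → ℂ) × (Fin n → ℂ)),
             ((Hp⁻¹.mulVec φ2, 0) : (Fin n → ℂ) × (Fin n → ℂ))})
    ∧ LinearMap.ker (H ^ 3) = LinearMap.ker (H ^ 2)
    ∧ Module.finrank ℂ (LinearMap.ker (H ^ 2)) = 4 :=
  generalized_nullspace_without_josephson_general n Hp Hm hHm hHp φ1 φ2 hind hker H hH
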